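/- arXiv:2509.05673 — 11 statements merged into one kernel-verified Lean document; each statement's English description precedes it below -/
import Mathlib

section
/- The ring Z_5 of integers modulo 5 is weakly strongly 2-nil-clean, but it is not strongly weakly nil-clean (the element 3 cannot be written as ±e + n with e idempotent and n nilpotent) and it is not strongly 2-nil-clean (3 cannot be written as e + f + n with e, f idempotent and n nilpotent). -/
/-- A ring is weakly strongly 2-nil-clean if every element is `±e ± f + n` with
`e, f` idempotents and `n` nilpotent, all commuting with each other. -/
def IsWeaklyStrongly2NilClean (R : Type*) [Ring R] : Prop :=
  ∀ a : R, ∃ e f n : R, IsIdempotentElem e ∧ IsIdempotentElem f ∧ IsNilpotent n ∧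
    Commute e f ∧ Commute e n ∧ Commute f n ∧
    (a = e + f + n ∨ a = e - f + n ∨ a = -e + f + n ∨ a = -e - f + n)

/-- A ring is strongly 2-nil-clean if every element is `e + f + n` with
`e, f` idempotents and `n` nilpotent, all commuting with each other. -/
def IsStrongly2NilClean (R : Type*) [Ring R] : Prop :=
  ∀ a : R, ∃ e f n : R, IsIdempotentElem e ∧ IsIdempotentElem f ∧ IsNilpotent n ∧
    Commute e f ∧ Commute e n ∧ Commute f n ∧ a = e + f + n

/-- A ring is strongly weakly nil-clean if every element is `±e + n`. -/
def IsStronglyWeaklyNilClean (R : Type*) [Ring R] : Prop :=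
  ∀ a : R, ∃ e n : R, IsIdempotentElem e ∧ IsNilpotent n ∧ Commute e n ∧
    (a = e + n ∨ a = -e + n)


lemma nil5 {n : ZMod 5} (h : IsNilpotent n) : n = 0 := by
  haveI : Fact (Nat.Prime 5) := ⟨by norm_num⟩
  exact h.eq_zero

lemma idem5 {e : ZMod 5} (h : IsIdempotentElem e) : e = 0 ∨ e = 1 := by
  revert h
  unfold IsIdempotentElem
  revert e; decide

lemma not3 : ¬ ∃ e n : ZMod 5, IsIdempotentElem e ∧ IsNilpotent n ∧ Commute e n ∧
    ((3 : ZMod 5) = e + n ∨ (3 : ZMod 5) = -e + n) := by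
  rintro ⟨e, n, he, hn, -, h⟩
  rw [nil5 hn] at h
  rcases idem5 he with rfl | rfl <;> rcases h with h | h <;> simp_all <;> exact absurd h (by decide)

lemma not3' : ¬ ∃ e f n : ZMod 5, IsIdempotentElem e ∧ IsIdempotentElem f ∧ IsNilpotent n ∧
    Commute e f ∧ Commute e n ∧ Commute f n ∧ (3 : ZMod 5) = e + f + n := by
  rintro ⟨e, f, n, he, hf, hn, -, -, -, h⟩
  rw [nil5 hn] at h
  rcases idem5 he with rfl | rfl <;> rcases idem5 hf with rfl | rfl <;> exact absurd h (by decide)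

theorem zmod5_wsnc_not_swnc_not_s2nc :
    IsWeaklyStrongly2NilClean (ZMod 5) ∧
    (¬ ∃ e n : ZMod 5, IsIdempotentElem e ∧ IsNilpotent n ∧ Commute e n ∧
        ((3 : ZMod 5) = e + n ∨ (3 : ZMod 5) = -e + n)) ∧
    ¬ IsStronglyWeaklyNilClean (ZMod 5) ∧
    (¬ ∃ e f n : ZMod 5, IsIdempotentElem e ∧ IsIdempotentElem f ∧ IsNilpotent n ∧
        Commute e f ∧ Commute e n ∧ Commute f n ∧ (3 : ZMod 5) = e + f + n) ∧
    ¬ IsStrongly2NilClean (ZMod 5) := by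
  refine ⟨?_, not3, fun h => not3 ?_, not3', fun h => not3' ?_⟩
  · intro a
    fin_cases a
    · exact ⟨0, 0, 0, .zero, .zero, ⟨1, by norm_num⟩, Commute.all _ _, Commute.all _ _,
        Commute.all _ _, Or.inl (by rfl)⟩
    · exact ⟨1, 0, 0, .one, .zero, ⟨1, by norm_num⟩, Commute.all _ _, Commute.all _ _,
        Commute.all _ _, Or.inl (by rfl)⟩
    · exact ⟨1, 1, 0, .one, .one, ⟨1, by norm_num⟩, Commute.all _ _, Commute.all _ _,
        Commute.all _ _, Or.inl (by rfl)⟩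
    · exact ⟨1, 1, 0, .one, .one, ⟨1, by norm_num⟩, Commute.all _ _, Commute.all _ _,
        Commute.all _ _, Or.inr (Or.inr (Or.inr (by rfl)))⟩
    · exact ⟨1, 0, 0, .one, .zero, ⟨1, by norm_num⟩, Commute.all _ _, Commute.all _ _,
        Commute.all _ _, Or.inr (Or.inr (Or.inl (by rfl)))⟩
  · obtain ⟨e, n, he, hn, hc, h⟩ := h 3
    exact ⟨e, n, he, hn, hc, h⟩
  · obtain ⟨e, f, n, he, hf, hn, h1, h2, h3, h⟩ := h 3
    exact ⟨e, f, n, he, hf, hn, h1, h2, h3, h⟩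
end

section
/- The ring Z_5 × Z_5 is not weakly strongly 2-nil-clean. -/
theorem zmod5_prod_not_wsnc : ¬ IsWeaklyStrongly2NilClean (ZMod 5 × ZMod 5) := by
  intro h
  obtain ⟨e, f, n, he, hf, hn, -, -, -, hc⟩ := h (2, 3)
  obtain ⟨n1, n2⟩ := n
  have h1 : n1 = (0 : ZMod 5) := by
    haveI : Fact (Nat.Prime 5) := ⟨by norm_num⟩
    exact (hn.map (RingHom.fst (ZMod 5) (ZMod 5))).eq_zero
  have h2 : n2 = (0 : ZMod 5) := by
    haveI : Fact (Nat.Prime 5) := ⟨by norm_num⟩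
    exact (hn.map (RingHom.snd (ZMod 5) (ZMod 5))).eq_zero
  subst h1 h2
  clear h hn
  unfold IsIdempotentElem at he hf
  revert hc he hf
  revert e f
  decide
end

section
/- If R is a weakly strongly 2-nil-clean ring in which 2 is nilpotent, then R is strongly nil-clean, i.e., every element of R is the sum of an idempotent and a nilpotent that commute with each other. -/
/-!
Since `e`, `f`, `n` commute pairwise, one may compute in the commutative subring they generate.
There the nilpotents form an ideal containing `2`, so modulo nilpotents `±e ± f + n ≡ e + f`,
and `e + f ≡ e + f - 2ef`, which is again idempotent.
-/

theorem IsIdempotentElem.add_sub_two_mul {R : Type*} [CommRing R] {e f : R}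
    (he : IsIdempotentElem e) (hf : IsIdempotentElem f) :
    IsIdempotentElem (e + f - 2 * e * f) := by
  unfold IsIdempotentElem
  linear_combination (1 + 4 * (f * f - f)) * he.eq + hf.eq

theorem exists_isIdempotentElem_isNilpotent_of_eq_signed_add {R : Type*} [CommRing R]
    (h2 : IsNilpotent (2 : R)) {a e f n : R} (he : IsIdempotentElem e)
    (hf : IsIdempotentElem f) (hn : IsNilpotent n)
    (ha : a = e + f + n ∨ a = e - f + n ∨ a = -e + f + n ∨ a = -e - f + n) :
    ∃ g m : R, IsIdempotentElem g ∧ IsNilpotent m ∧ a = g + m := by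
  refine ⟨e + f - 2 * e * f, a - (e + f - 2 * e * f), he.add_sub_two_mul hf, ?_, by ring⟩
  obtain ⟨c, hc⟩ : ∃ c, a - (e + f - 2 * e * f) = 2 * c + n := by
    rcases ha with rfl | rfl | rfl | rfl
    exacts [⟨e * f, by ring⟩, ⟨e * f - f, by ring⟩, ⟨e * f - e, by ring⟩,
      ⟨e * f - e - f, by ring⟩]
  rw [hc, ← mem_nilradical]
  rw [← mem_nilradical] at h2 hn
  exact add_mem (Ideal.mul_mem_right c _ h2) hn

open scoped IsMulCommutative in
theorem exists_isIdempotentElem_isNilpotent_of_eq_signed_add_of_commute {R : Type*} [Ring R]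
    (h2 : IsNilpotent (2 : R)) {a e f n : R} (he : IsIdempotentElem e)
    (hf : IsIdempotentElem f) (hn : IsNilpotent n)
    (hef : Commute e f) (hen : Commute e n) (hfn : Commute f n)
    (ha : a = e + f + n ∨ a = e - f + n ∨ a = -e + f + n ∨ a = -e - f + n) :
    ∃ g m : R, IsIdempotentElem g ∧ IsNilpotent m ∧ Commute g m ∧ a = g + m := by
  set S := Subring.closure ({e, f, n} : Set R)
  have : IsMulCommutative S := Subring.isMulCommutative_closure <| by
    simp only [Set.mem_insert_iff, Set.mem_singleton_iff]
    rintro x (rfl | rfl | rfl) y (rfl | rfl | rfl)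
    exacts [rfl, hef.eq, hen.eq, hef.eq.symm, rfl, hfn.eq, hen.eq.symm, hfn.eq.symm, rfl]
  have he' : e ∈ S := Subring.subset_closure (by simp)
  have hf' : f ∈ S := Subring.subset_closure (by simp)
  have hn' : n ∈ S := Subring.subset_closure (by simp)
  have ha' : a ∈ S := by
    rcases ha with rfl | rfl | rfl | rfl
    exacts [add_mem (add_mem he' hf') hn', add_mem (sub_mem he' hf') hn',
      add_mem (add_mem (neg_mem he') hf') hn', add_mem (sub_mem (neg_mem he') hf') hn']
  have h2' : IsNilpotent (2 : S) :=
    (IsNilpotent.map_iff S.subtype_injective).mp (by rwa [map_ofNat])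
  obtain ⟨g, m, hg, hm, hgm⟩ := exists_isIdempotentElem_isNilpotent_of_eq_signed_add
    (a := ⟨a, ha'⟩) (e := ⟨e, he'⟩) (f := ⟨f, hf'⟩) (n := ⟨n, hn'⟩) h2'
    (Subtype.ext he) (Subtype.ext hf) ((IsNilpotent.map_iff S.subtype_injective).mp hn)
    (by simpa [Subtype.ext_iff] using ha)
  exact ⟨g, m, hg.map S.subtype, hm.map S.subtype, (Commute.all g m).map S.subtype,
    congrArg S.subtype hgm⟩

theorem stronglyNilClean_of_wsnc_two_nilpotent {R : Type*} [Ring R]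
    (hR : IsWeaklyStrongly2NilClean R) (h2 : IsNilpotent (2 : R)) :
    ∀ a : R, ∃ e n : R, IsIdempotentElem e ∧ IsNilpotent n ∧ Commute e n ∧ a = e + n := by
  intro a
  obtain ⟨e, f, n, he, hf, hn, hef, hen, hfn, ha⟩ := hR a
  exact exists_isIdempotentElem_isNilpotent_of_eq_signed_add_of_commute h2 he hf hn hef hen hfn ha
end

section
/- If R is a weakly strongly 2-nil-clean ring in which 3 is nilpotent, then R is strongly 2-nil-clean, i.e., every element of R is a sum of two idempotents and a nilpotent which commute with each other. -/
/-!
All the work happens in the commutative subring generated by `e`, `f` and `n`. There, for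
orthogonal idempotents `u`, `v` one has `v - u = (u + v) + u - 3u`, where `u + v` is idempotent
and `3u` is nilpotent. The remaining sign patterns reduce to this one:
`e - f = e(1 - f) - f(1 - e)` and `-e - f = ef - (e(1 - f) + f(1 - e)) - 3ef`.
-/

section Elements

variable {R : Type*} [Ring R]

def IsWeaklyStrongly2NilCleanElem (a : R) : Prop :=
  ∃ e f n : R, IsIdempotentElem e ∧ IsIdempotentElem f ∧ IsNilpotent n ∧
    Commute e f ∧ Commute e n ∧ Commute f n ∧
    (a = e + f + n ∨ a = e - f + n ∨ a = -e + f + n ∨ a = -e - f + n)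

def IsStrongly2NilCleanElem (a : R) : Prop :=
  ∃ e f n : R, IsIdempotentElem e ∧ IsIdempotentElem f ∧ IsNilpotent n ∧
    Commute e f ∧ Commute e n ∧ Commute f n ∧ a = e + f + n

theorem IsStrongly2NilCleanElem.map {S F : Type*} [Ring S] [FunLike F R S] [RingHomClass F R S]
    {a : R} (ha : IsStrongly2NilCleanElem a) (φ : F) : IsStrongly2NilCleanElem (φ a) := by
  obtain ⟨e, f, n, he, hf, hn, hef, hen, hfn, rfl⟩ := ha
  exact ⟨φ e, φ f, φ n, he.map φ, hf.map φ, hn.map φ, hef.map φ, hen.map φ, hfn.map φ,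
    by rw [map_add, map_add]⟩

end Elements

section CommRing

variable {A : Type*} [CommRing A] {a e f n u v : A}

theorem isStrongly2NilCleanElem_of_eq_add (he : IsIdempotentElem e) (hf : IsIdempotentElem f)
    (hn : IsNilpotent n) (ha : a = e + f + n) : IsStrongly2NilCleanElem a :=
  ⟨e, f, n, he, hf, hn, .all e f, .all e n, .all f n, ha⟩

theorem IsNilpotent.sub_three_mul (hn : IsNilpotent n) (h3 : IsNilpotent (3 : A)) (x : A) :
    IsNilpotent (n - 3 * x) :=
  (Commute.all _ _).isNilpotent_sub hn ((Commute.all _ _).isNilpotent_mul_right h3)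

theorem isStrongly2NilCleanElem_sub_add_of_mul_eq_zero (h3 : IsNilpotent (3 : A))
    (hu : IsIdempotentElem u) (hv : IsIdempotentElem v) (huv : u * v = 0) (hn : IsNilpotent n) :
    IsStrongly2NilCleanElem (v - u + n) :=
  isStrongly2NilCleanElem_of_eq_add (hu.add hv (by rw [huv, mul_comm, huv, add_zero])) hu
    (hn.sub_three_mul h3 u) (by ring)

theorem isStrongly2NilCleanElem_sub_add (h3 : IsNilpotent (3 : A)) (he : IsIdempotentElem e)
    (hf : IsIdempotentElem f) (hn : IsNilpotent n) : IsStrongly2NilCleanElem (e - f + n) := by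
  have horth : f * (1 - e) * (e * (1 - f)) = 0 := by
    linear_combination (f * (1 - f)) * he.mul_one_sub_self
  simpa only [show e * (1 - f) - f * (1 - e) = e - f by ring] using
    isStrongly2NilCleanElem_sub_add_of_mul_eq_zero h3 (hf.mul he.one_sub) (he.mul hf.one_sub)
      horth hn

theorem isStrongly2NilCleanElem_neg_sub_add (h3 : IsNilpotent (3 : A)) (he : IsIdempotentElem e)
    (hf : IsIdempotentElem f) (hn : IsNilpotent n) : IsStrongly2NilCleanElem (-e - f + n) := by
  have hxor : IsIdempotentElem (e * (1 - f) + f * (1 - e)) :=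
    (he.mul hf.one_sub).add (hf.mul he.one_sub) (by
      linear_combination (2 * f * (1 - f)) * he.mul_one_sub_self)
  have horth : (e * (1 - f) + f * (1 - e)) * (e * f) = 0 := by
    linear_combination (e * e) * hf.mul_one_sub_self + (f * f) * he.mul_one_sub_self
  simpa only [show e * f - (e * (1 - f) + f * (1 - e)) + (n - 3 * (e * f)) = -e - f + n by ring]
    using isStrongly2NilCleanElem_sub_add_of_mul_eq_zero h3 hxor (he.mul hf) horth
      (hn.sub_three_mul h3 (e * f))

theorem isStrongly2NilCleanElem_of_eq_signed_add (h3 : IsNilpotent (3 : A))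
    (he : IsIdempotentElem e) (hf : IsIdempotentElem f) (hn : IsNilpotent n)
    (ha : a = e + f + n ∨ a = e - f + n ∨ a = -e + f + n ∨ a = -e - f + n) :
    IsStrongly2NilCleanElem a := by
  rcases ha with rfl | rfl | rfl | rfl
  · exact isStrongly2NilCleanElem_of_eq_add he hf hn rfl
  · exact isStrongly2NilCleanElem_sub_add h3 he hf hn
  · simpa only [neg_add_eq_sub] using isStrongly2NilCleanElem_sub_add h3 hf he hn
  · exact isStrongly2NilCleanElem_neg_sub_add h3 he hf hn

end CommRing

open scoped IsMulCommutative in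
theorem IsWeaklyStrongly2NilCleanElem.isStrongly2NilCleanElem {R : Type*} [Ring R] {a : R}
    (h3 : IsNilpotent (3 : R)) (ha : IsWeaklyStrongly2NilCleanElem a) :
    IsStrongly2NilCleanElem a := by
  obtain ⟨e, f, n, he, hf, hn, hef, hen, hfn, ha⟩ := ha
  let S := Subring.closure {e, f, n}
  have : IsMulCommutative S := Subring.isMulCommutative_closure <| by
    simp only [Set.mem_insert_iff, Set.mem_singleton_iff]
    rintro x (rfl | rfl | rfl) y (rfl | rfl | rfl) <;> simp only [hef.eq, hen.eq, hfn.eq]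
  let e' : S := ⟨e, Subring.subset_closure (by simp)⟩
  let f' : S := ⟨f, Subring.subset_closure (by simp)⟩
  let n' : S := ⟨n, Subring.subset_closure (by simp)⟩
  have hinj : Function.Injective S.subtype := Subtype.val_injective
  have h3' : IsNilpotent (3 : S) := (IsNilpotent.map_iff hinj).1 (by rwa [map_ofNat])
  have he' : IsIdempotentElem e' := Subtype.ext he
  have hf' : IsIdempotentElem f' := Subtype.ext hf
  have hn' : IsNilpotent n' := (IsNilpotent.map_iff (f := S.subtype) hinj).1 hn
  obtain ⟨a', rfl, ha'⟩ : ∃ a' : S, S.subtype a' = a ∧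
      (a' = e' + f' + n' ∨ a' = e' - f' + n' ∨ a' = -e' + f' + n' ∨ a' = -e' - f' + n') := by
    rcases ha with rfl | rfl | rfl | rfl
    exacts [⟨_, rfl, .inl rfl⟩, ⟨_, rfl, .inr (.inl rfl)⟩, ⟨_, rfl, .inr (.inr (.inl rfl))⟩,
      ⟨_, rfl, .inr (.inr (.inr rfl))⟩]
  exact (isStrongly2NilCleanElem_of_eq_signed_add h3' he' hf' hn' ha').map S.subtype

theorem strongly2NilClean_of_wsnc_three_nilpotent {R : Type*} [Ring R]
    (hR : IsWeaklyStrongly2NilClean R) (h3 : IsNilpotent (3 : R)) :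
    IsStrongly2NilClean R :=
  fun a => IsWeaklyStrongly2NilCleanElem.isStrongly2NilCleanElem h3 (hR a)
end

section
/- Let R be a ring in which 3 is nilpotent. Then the following are equivalent: (1) R is strongly 2-nil-clean; (2) for every a ∈ R there exist idempotents e, f ∈ R and a nilpotent w ∈ R, commuting with each other, such that a = e - f + w; (3) for every a ∈ R there exist idempotents e, f ∈ R and a nilpotent w ∈ R, commuting with each other, such that a = -e - f + w. -/
/-! When `3` is nilpotent, each of the three decompositions of `a` exists exactly when `a - a ^ 3`
is nilpotent. Everything happens in a commutative subring (generated by `e, f, n`, resp. by `a`).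
There, `(e ± f) ^ 3 ≡ e ± f` modulo the nil ideal `(3)`, and adding a nilpotent preserves this.
Conversely, modulo the nil ideal `(a - a ^ 3, 3)` the element `a` is a tripotent in characteristic
`3`, so `a ^ 2`, `a - a ^ 2` and `-(a ^ 2 + a)` are idempotent there. Lifting them to idempotents
(Newton's method for `X ^ 2 - X`) gives both decompositions, because `a = a ^ 2 + (a - a ^ 2)` and
`a = -(a ^ 2 + a) - (a - a ^ 2) + 3 * a`. -/

open Polynomial

section CommRing

variable {S : Type*} [CommRing S]

theorem exists_isIdempotentElem_isNilpotent_sub {x : S} (hx : IsNilpotent (x ^ 2 - x)) :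
    ∃ e : S, IsIdempotentElem e ∧ IsNilpotent (x - e) := by
  let P : ℤ[X] := X ^ 2 - X
  have hP : aeval x P = x ^ 2 - x := by simp [P]
  have hP' : IsUnit (aeval x (derivative P)) := by
    have hsq : aeval x (derivative P) ^ 2 = 1 + 4 * (x ^ 2 - x) := by
      simp only [P, derivative_sub, derivative_X_pow_succ, Nat.cast_one, Int.reduceAdd, map_ofNat,
        pow_one, derivative_X, aeval_sub, map_mul, aeval_X, map_one]
      ring
    refine (isUnit_pow_iff two_ne_zero).mp ?_
    rw [hsq]
    exact ((Commute.all _ _).isNilpotent_mul_left hx).isUnit_one_add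
  obtain ⟨e, ⟨hxe, he⟩, -⟩ := existsUnique_nilpotent_sub_and_aeval_eq_zero (hP ▸ hx) hP'
  refine ⟨e, ?_, hxe⟩
  simpa [P, IsIdempotentElem, sq, sub_eq_zero] using he

theorem isNilpotent_sub_cube_add {s n : S} (hs : IsNilpotent (s - s ^ 3)) (hn : IsNilpotent n) :
    IsNilpotent ((s + n) - (s + n) ^ 3) := by
  have hdiff := isNilpotent_aeval_sub_of_isNilpotent_sub (X - X ^ 3 : ℤ[X])
    (show IsNilpotent ((s + n) - s) by simpa using hn)
  simp only [map_sub, map_pow, aeval_X] at hdiff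
  simpa using (Commute.all _ _).isNilpotent_add hdiff hs

theorem isNilpotent_sub_cube_add_add (h3 : IsNilpotent (3 : S)) {e f n : S}
    (he : IsIdempotentElem e) (hf : IsIdempotentElem f) (hn : IsNilpotent n) :
    IsNilpotent ((e + f + n) - (e + f + n) ^ 3) := by
  have hs : (e + f) - (e + f) ^ 3 = 3 * (-2 * e * f) := by
    linear_combination (-(1 + 3 * f + e)) * he.eq + (-(1 + f + 3 * e)) * hf.eq
  refine isNilpotent_sub_cube_add ?_ hn
  rw [hs]
  exact (Commute.all _ _).isNilpotent_mul_right h3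

theorem isNilpotent_sub_cube_sub_add {e f n : S} (he : IsIdempotentElem e)
    (hf : IsIdempotentElem f) (hn : IsNilpotent n) :
    IsNilpotent ((e - f + n) - (e - f + n) ^ 3) := by
  have hs : (e - f) - (e - f) ^ 3 = 0 := by
    linear_combination (-1 + 3 * f - e) * he.eq + (1 + f - 3 * e) * hf.eq
  exact isNilpotent_sub_cube_add (hs ▸ IsNilpotent.zero) hn

theorem exists_decompositions_of_isNilpotent_sub_cube (h3 : IsNilpotent (3 : S)) {x : S}
    (hx : IsNilpotent (x - x ^ 3)) :
    (∃ e f n : S, IsIdempotentElem e ∧ IsIdempotentElem f ∧ IsNilpotent n ∧ x = e + f + n) ∧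
      ∃ e f w : S, IsIdempotentElem e ∧ IsIdempotentElem f ∧ IsNilpotent w ∧ x = e - f + w := by
  have hI {y : S} (a b : S) (hy : a * (x - x ^ 3) + b * 3 = y) : IsNilpotent y :=
    hy ▸ (Commute.all _ _).isNilpotent_add ((Commute.all _ _).isNilpotent_mul_left hx)
      ((Commute.all _ _).isNilpotent_mul_left h3)
  obtain ⟨e₁, he₁, hxe₁⟩ := exists_isIdempotentElem_isNilpotent_sub (x := x ^ 2)
    (hI (-x) 0 (by ring))
  obtain ⟨e₂, he₂, hxe₂⟩ := exists_isIdempotentElem_isNilpotent_sub (x := -(x ^ 2 + x))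
    (hI (-(x + 2)) (x ^ 2 + x) (by ring))
  obtain ⟨f, hf, hxf⟩ := exists_isIdempotentElem_isNilpotent_sub (x := x - x ^ 2)
    (hI (2 - x) (x ^ 2 - x) (by ring))
  refine ⟨⟨e₁, f, (x ^ 2 - e₁) + (x - x ^ 2 - f), he₁, hf, ?_, by ring⟩,
    e₂, f, (-(x ^ 2 + x) - e₂) - (x - x ^ 2 - f) + 3 * x, he₂, hf, ?_, by ring⟩
  · exact (Commute.all _ _).isNilpotent_add hxe₁ hxf
  · exact (Commute.all _ _).isNilpotent_add ((Commute.all _ _).isNilpotent_sub hxe₂ hxf)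
      (hI 0 x (by ring))

end CommRing

section Ring

variable {R : Type*} [Ring R]

open scoped IsMulCommutative

theorem isNilpotent_sub_cube_of_commute (h3 : IsNilpotent (3 : R)) {e f n : R}
    (he : IsIdempotentElem e) (hf : IsIdempotentElem f) (hn : IsNilpotent n)
    (hef : Commute e f) (hen : Commute e n) (hfn : Commute f n) :
    IsNilpotent ((e + f + n) - (e + f + n) ^ 3) ∧ IsNilpotent ((e - f + n) - (e - f + n) ^ 3) := by
  let T := Algebra.adjoin ℤ ({e, f, n} : Set R)
  have : IsMulCommutative T := Algebra.isMulCommutative_adjoin ℤ <| by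
    simp only [Set.mem_insert_iff, Set.mem_singleton_iff]
    rintro x (rfl | rfl | rfl) y (rfl | rfl | rfl) <;> simp [hef.eq, hen.eq, hfn.eq]
  have nil {x : T} (hx : IsNilpotent (T.val x)) : IsNilpotent x :=
    (IsNilpotent.map_iff Subtype.val_injective).mp hx
  let e' : T := ⟨e, Algebra.subset_adjoin (by simp)⟩
  let f' : T := ⟨f, Algebra.subset_adjoin (by simp)⟩
  let n' : T := ⟨n, Algebra.subset_adjoin (by simp)⟩
  have he' : IsIdempotentElem e' := Subtype.ext he
  have hf' : IsIdempotentElem f' := Subtype.ext hf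
  have hn' : IsNilpotent n' := nil hn
  have h3' : IsNilpotent (3 : T) := nil (by rwa [map_ofNat])
  exact ⟨(isNilpotent_sub_cube_add_add h3' he' hf' hn').map T.val,
    (isNilpotent_sub_cube_sub_add he' hf' hn').map T.val⟩

theorem exists_commuting_decompositions_of_isNilpotent_sub_cube (h3 : IsNilpotent (3 : R)) {a : R}
    (ha : IsNilpotent (a - a ^ 3)) :
    (∃ e f n : R, IsIdempotentElem e ∧ IsIdempotentElem f ∧ IsNilpotent n ∧
      Commute e f ∧ Commute e n ∧ Commute f n ∧ a = e + f + n) ∧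
    (∃ e f w : R, IsIdempotentElem e ∧ IsIdempotentElem f ∧ IsNilpotent w ∧
      Commute e f ∧ Commute e w ∧ Commute f w ∧ a = e - f + w) := by
  let T := Algebra.adjoin ℤ ({a} : Set R)
  have nil {x : T} (hx : IsNilpotent (T.val x)) : IsNilpotent x :=
    (IsNilpotent.map_iff Subtype.val_injective).mp hx
  have h3' : IsNilpotent (3 : T) := nil (by rwa [map_ofNat])
  obtain ⟨⟨e, f, n, he, hf, hn, ha₁⟩, ⟨e₂, f₂, w, he₂, hf₂, hw, ha₂⟩⟩ :=
    exists_decompositions_of_isNilpotent_sub_cube h3'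
      (x := ⟨a, Algebra.self_mem_adjoin_singleton ℤ a⟩) (nil ha)
  exact ⟨⟨T.val e, T.val f, T.val n, he.map _, hf.map _, hn.map _, (Commute.all _ _).map _,
      (Commute.all _ _).map _, (Commute.all _ _).map _, by simpa using congrArg T.val ha₁⟩,
    ⟨T.val e₂, T.val f₂, T.val w, he₂.map _, hf₂.map _, hw.map _, (Commute.all _ _).map _,
      (Commute.all _ _).map _, (Commute.all _ _).map _, by simpa using congrArg T.val ha₂⟩⟩

theorem exists_eq_add_add_iff_isNilpotent_sub_cube (h3 : IsNilpotent (3 : R)) (a : R) :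
    (∃ e f n : R, IsIdempotentElem e ∧ IsIdempotentElem f ∧ IsNilpotent n ∧
      Commute e f ∧ Commute e n ∧ Commute f n ∧ a = e + f + n) ↔ IsNilpotent (a - a ^ 3) := by
  refine ⟨?_, fun ha ↦ (exists_commuting_decompositions_of_isNilpotent_sub_cube h3 ha).1⟩
  rintro ⟨e, f, n, he, hf, hn, hef, hen, hfn, rfl⟩
  exact (isNilpotent_sub_cube_of_commute h3 he hf hn hef hen hfn).1

theorem exists_eq_sub_add_iff_isNilpotent_sub_cube (h3 : IsNilpotent (3 : R)) (a : R) :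
    (∃ e f w : R, IsIdempotentElem e ∧ IsIdempotentElem f ∧ IsNilpotent w ∧
      Commute e f ∧ Commute e w ∧ Commute f w ∧ a = e - f + w) ↔ IsNilpotent (a - a ^ 3) := by
  refine ⟨?_, fun ha ↦ (exists_commuting_decompositions_of_isNilpotent_sub_cube h3 ha).2⟩
  rintro ⟨e, f, w, he, hf, hw, hef, hew, hfw, rfl⟩
  exact (isNilpotent_sub_cube_of_commute h3 he hf hw hef hew hfw).2

theorem exists_eq_neg_sub_add_iff_isNilpotent_sub_cube (h3 : IsNilpotent (3 : R)) (a : R) :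
    (∃ e f w : R, IsIdempotentElem e ∧ IsIdempotentElem f ∧ IsNilpotent w ∧
      Commute e f ∧ Commute e w ∧ Commute f w ∧ a = -e - f + w) ↔ IsNilpotent (a - a ^ 3) := by
  calc _ ↔ ∃ e f n : R, IsIdempotentElem e ∧ IsIdempotentElem f ∧ IsNilpotent n ∧
          Commute e f ∧ Commute e n ∧ Commute f n ∧ -a = e + f + n := by
        constructor
        · rintro ⟨e, f, w, he, hf, hw, hef, hew, hfw, rfl⟩
          exact ⟨e, f, -w, he, hf, hw.neg, hef, hew.neg_right, hfw.neg_right, by abel⟩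
        · rintro ⟨e, f, n, he, hf, hn, hef, hen, hfn, ha⟩
          exact ⟨e, f, -n, he, hf, hn.neg, hef, hen.neg_right, hfn.neg_right,
            by rw [← neg_neg a, ha]; abel⟩
    _ ↔ IsNilpotent (-a - (-a) ^ 3) := exists_eq_add_add_iff_isNilpotent_sub_cube h3 (-a)
    _ ↔ IsNilpotent (a - a ^ 3) := by
        rw [← isNilpotent_neg_iff, show -(-a - (-a) ^ 3) = a - a ^ 3 by noncomm_ring]

end Ring

theorem strongly2NilClean_tfae_of_three_nilpotent {R : Type*} [Ring R]
    (h3 : IsNilpotent (3 : R)) :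
    (IsStrongly2NilClean R ↔
      ∀ a : R, ∃ e f w : R, IsIdempotentElem e ∧ IsIdempotentElem f ∧ IsNilpotent w ∧
        Commute e f ∧ Commute e w ∧ Commute f w ∧ a = e - f + w) ∧
    (IsStrongly2NilClean R ↔
      ∀ a : R, ∃ e f w : R, IsIdempotentElem e ∧ IsIdempotentElem f ∧ IsNilpotent w ∧
        Commute e f ∧ Commute e w ∧ Commute f w ∧ a = -e - f + w) := by
  have h1 : IsStrongly2NilClean R ↔ ∀ a : R, IsNilpotent (a - a ^ 3) :=
    forall_congr' (exists_eq_add_add_iff_isNilpotent_sub_cube h3)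
  exact ⟨h1.trans (forall_congr' fun a ↦ (exists_eq_sub_add_iff_isNilpotent_sub_cube h3 a).symm),
    h1.trans (forall_congr' fun a ↦ (exists_eq_neg_sub_add_iff_isNilpotent_sub_cube h3 a).symm)⟩
end

section
/- If S is a strongly 2-nil-clean ring, then the product ring R × S is weakly strongly 2-nil-clean if and only if R is weakly strongly 2-nil-clean. -/
private lemma prod_nilp {R S : Type*} [Ring R] [Ring S] {n : R} {m : S}
    (hn : IsNilpotent n) (hm : IsNilpotent m) : IsNilpotent ((n, m) : R × S) := by
  obtain ⟨k, hk⟩ := hn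
  obtain ⟨l, hl⟩ := hm
  refine ⟨k + l, ?_⟩
  ext
  · simp [Prod.pow_fst, pow_add, hk]
  · simp [Prod.pow_snd, pow_add, hl]

theorem prod_wsnc_iff {R S : Type*} [Ring R] [Ring S] (hS : IsStrongly2NilClean S) :
    IsWeaklyStrongly2NilClean (R × S) ↔ IsWeaklyStrongly2NilClean R := by
  constructor
  · intro h a
    obtain ⟨e, f, n, he, hf, hn, hef, hen, hfn, hcase⟩ := h (a, 0)
    refine ⟨e.1, f.1, n.1, congrArg Prod.fst he, congrArg Prod.fst hf,
      hn.map (RingHom.fst R S), congrArg Prod.fst hef, congrArg Prod.fst hen,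
      congrArg Prod.fst hfn, ?_⟩
    rcases hcase with h' | h' | h' | h'
    · exact Or.inl (congrArg Prod.fst h')
    · exact Or.inr (Or.inl (congrArg Prod.fst h'))
    · exact Or.inr (Or.inr (Or.inl (congrArg Prod.fst h')))
    · exact Or.inr (Or.inr (Or.inr (congrArg Prod.fst h')))
  · intro h a
    obtain ⟨e, f, n, he, hf, hn, hef, hen, hfn, hcase⟩ := h a.1
    rcases hcase with h' | h' | h' | h'
    · obtain ⟨e', f', n', he', hf', hn', hef', hen', hfn', hb⟩ := hS a.2
      exact ⟨(e, e'), (f, f'), (n, n'), Prod.ext he he', Prod.ext hf hf',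
        prod_nilp hn hn', Prod.ext hef hef', Prod.ext hen hen', Prod.ext hfn hfn',
        Or.inl (Prod.ext h' hb)⟩
    · obtain ⟨e', f', n', he', hf', hn', hef', hen', hfn', hb⟩ := hS (a.2 + 1)
      refine ⟨(e, e'), (f, 1 - f'), (n, n'), Prod.ext he he',
        Prod.ext hf hf'.one_sub, prod_nilp hn hn',
        Prod.ext hef ((Commute.one_right e').sub_right hef'),
        Prod.ext hen hen', Prod.ext hfn ((Commute.one_left n').sub_left hfn'),
        Or.inr (Or.inl (Prod.ext h' ?_))⟩
      have h2 : a.2 = e' + f' + n' - 1 := eq_sub_of_add_eq hb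
      show a.2 = e' - (1 - f') + n'
      rw [h2]; noncomm_ring
    · obtain ⟨e', f', n', he', hf', hn', hef', hen', hfn', hb⟩ := hS (a.2 + 1)
      refine ⟨(e, 1 - e'), (f, f'), (n, n'), Prod.ext he he'.one_sub,
        Prod.ext hf hf', prod_nilp hn hn',
        Prod.ext hef ((Commute.one_left f').sub_left hef'),
        Prod.ext hen ((Commute.one_left n').sub_left hen'),
        Prod.ext hfn hfn',
        Or.inr (Or.inr (Or.inl (Prod.ext h' ?_)))⟩
      have h2 : a.2 = e' + f' + n' - 1 := eq_sub_of_add_eq hb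
      show a.2 = -(1 - e') + f' + n'
      rw [h2]; noncomm_ring
    · obtain ⟨e', f', n', he', hf', hn', hef', hen', hfn', hb⟩ := hS (a.2 + 2)
      refine ⟨(e, 1 - e'), (f, 1 - f'), (n, n'), Prod.ext he he'.one_sub,
        Prod.ext hf hf'.one_sub, prod_nilp hn hn',
        Prod.ext hef ((Commute.one_right (1 - e')).sub_right
          ((Commute.one_left f').sub_left hef')),
        Prod.ext hen ((Commute.one_left n').sub_left hen'),
        Prod.ext hfn ((Commute.one_left n').sub_left hfn'),
        Or.inr (Or.inr (Or.inr (Prod.ext h' ?_)))⟩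
      have h2 : a.2 = e' + f' + n' - 2 := eq_sub_of_add_eq hb
      show a.2 = -(1 - e') - (1 - f') + n'
      rw [h2, show (2:S) = 1 + 1 by norm_num]; noncomm_ring
end

section
/- If R is a weakly strongly 2-nil-clean ring, then 30 is a nilpotent element of R. -/
open Polynomial

section CommRing

variable {S : Type*} [CommRing S] {e f : S}

theorem IsIdempotentElem.add_mul_add_sub_one_mul_add_sub_two_eq_zero (he : IsIdempotentElem e)
    (hf : IsIdempotentElem f) : (e + f) * (e + f - 1) * (e + f - 2) = 0 := by
  linear_combination (e + f - 2 + 2 * f) * he.eq + (e + f - 2 + 2 * e) * hf.eq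

theorem IsIdempotentElem.sub_pow_three (he : IsIdempotentElem e) (hf : IsIdempotentElem f) :
    (e - f) ^ 3 = e - f := by
  linear_combination (e + 1 - 3 * f) * he.eq + (3 * e - f - 1) * hf.eq

theorem IsIdempotentElem.mul_sq_sub_one_mul_sq_sub_four_eq_zero (he : IsIdempotentElem e)
    (hf : IsIdempotentElem f) {s : S}
    (hs : s = e + f ∨ s = e - f ∨ s = -e + f ∨ s = -e - f) :
    s * (s ^ 2 - 1) * (s ^ 2 - 4) = 0 := by
  have hadd := he.add_mul_add_sub_one_mul_add_sub_two_eq_zero hf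
  have hsub := he.sub_pow_three hf
  rcases hs with rfl | rfl | rfl | rfl
  · linear_combination (e + f + 1) * (e + f + 2) * hadd
  · linear_combination ((e - f) ^ 2 - 4) * hsub
  · linear_combination -((e - f) ^ 2 - 4) * hsub
  · linear_combination -(e + f + 1) * (e + f + 2) * hadd

theorem isNilpotent_thirty_of_three_eq (he : IsIdempotentElem e) (hf : IsIdempotentElem f)
    {n : S} (hn : IsNilpotent n)
    (h : 3 = e + f + n ∨ 3 = e - f + n ∨ 3 = -e + f + n ∨ 3 = -e - f + n) :
    IsNilpotent (30 : S) := by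
  let p : ℤ[X] := X * (X ^ 2 - 1) * (X ^ 2 - 4)
  have hs : 3 - n = e + f ∨ 3 - n = e - f ∨ 3 - n = -e + f ∨ 3 - n = -e - f := by
    rcases h with h | h | h | h <;> simp [h]
  have hroot : aeval (3 - n) p = 0 := by
    simpa [p, map_ofNat] using he.mul_sq_sub_one_mul_sq_sub_four_eq_zero hf hs
  have h120 : IsNilpotent (120 : S) := by
    have := isNilpotent_aeval_sub_of_isNilpotent_sub p (a := (3 : S)) (b := 3 - n)
      (by rwa [sub_sub_cancel])
    rwa [hroot, sub_zero, show aeval (3 : S) p = 120 by norm_num [p, map_ofNat]] at this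
  refine IsNilpotent.of_pow (m := 3) ?_
  rw [show (30 : S) ^ 3 = 225 * 120 by norm_num]
  exact (Commute.all _ _).isNilpotent_mul_left h120

end CommRing

open scoped IsMulCommutative in
theorem isNilpotent_thirty_of_three_eq_of_commute {R : Type*} [Ring R] {e f n : R}
    (he : IsIdempotentElem e) (hf : IsIdempotentElem f) (hn : IsNilpotent n)
    (hef : Commute e f) (hen : Commute e n) (hfn : Commute f n)
    (h : 3 = e + f + n ∨ 3 = e - f + n ∨ 3 = -e + f + n ∨ 3 = -e - f + n) :
    IsNilpotent (30 : R) := by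
  let S := Subring.closure {e, f, n}
  have : IsMulCommutative S := Subring.isMulCommutative_closure <| by
    simp only [Set.mem_insert_iff, Set.mem_singleton_iff]
    rintro x (rfl | rfl | rfl) y (rfl | rfl | rfl) <;> simp [hef.eq, hen.eq, hfn.eq]
  let E : S := ⟨e, Subring.subset_closure (by simp)⟩
  let F : S := ⟨f, Subring.subset_closure (by simp)⟩
  let N : S := ⟨n, Subring.subset_closure (by simp)⟩
  have hN : IsNilpotent N := (IsNilpotent.map_iff (f := S.subtype) Subtype.val_injective).1 hn
  have hS : IsNilpotent (30 : S) := isNilpotent_thirty_of_three_eq (e := E) (f := F)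
    (Subtype.ext he) (Subtype.ext hf) hN
    (h.imp Subtype.ext (.imp Subtype.ext (.imp Subtype.ext Subtype.ext)))
  exact hS.map S.subtype

theorem thirty_nilpotent_of_wsnc {R : Type*} [Ring R]
    (hR : IsWeaklyStrongly2NilClean R) : IsNilpotent (30 : R) := by
  obtain ⟨e, f, n, he, hf, hn, hef, hen, hfn, h⟩ := hR 3
  exact isNilpotent_thirty_of_three_eq_of_commute he hf hn hef hen hfn h
end

section
/- If R is a weakly strongly 2-nil-clean ring, then the Jacobson radical J(R) is a nil ideal, i.e., every element of J(R) is nilpotent. -/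
/-!
Write `a = y + n` with `y = ±e ± f`. Since `e, f` are commuting idempotents, `y` is a root of
`T³ - T`, `T(T - 1)(T - 2)` or `T(T + 1)(T + 2)`. For `a = 3` this makes `24`, `6` or `60`, hence
`120`, nilpotent.

For `x ∈ J(R)`, compute in the bicommutant of `{e, f, n}`: a commutative subring, closed under
inverses, whose Jacobson radical therefore contains `x`. There the nilpotent `n` lies in the
Jacobson radical, hence so does `y = x - n`, and `1 - y`, `1 + y`, `1 + 2y` are units. A root of
`T³ - T` is then `0`. A root of `T(T - 1)(T - 2)` (replace `y` by `-y` for the last cubic)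
satisfies `y² = 2y`, so `y⁴ (1 + y)(1 + 2y) = 120 y` is nilpotent, and so is `y`.
-/

section Jacobson

variable {R : Type*} [Ring R]

theorem Ideal.exists_mul_one_add_eq_one_of_mem_jacobson_bot {x : R}
    (hx : x ∈ Ideal.jacobson (⊥ : Ideal R)) : ∃ z, z * (1 + x) = 1 := by
  obtain ⟨z, hz⟩ := Ideal.mem_jacobson_iff.mp hx 1
  exact ⟨z, by rwa [Ideal.mem_bot, sub_eq_zero, mul_one, add_comm, ← mul_one_add] at hz⟩

theorem Ideal.isUnit_one_add_of_mem_jacobson_bot {x : R}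
    (hx : x ∈ Ideal.jacobson (⊥ : Ideal R)) : IsUnit (1 + x) := by
  obtain ⟨z, hz⟩ := exists_mul_one_add_eq_one_of_mem_jacobson_bot hx
  -- `z = 1 - z * x` has a left inverse too, which must then be `1 + x`
  obtain ⟨w, hw⟩ := exists_mul_one_add_eq_one_of_mem_jacobson_bot
    (neg_mem (Ideal.mul_mem_left _ z hx))
  have hz' : 1 + -(z * x) = z := by rw [← hz]; noncomm_ring
  rw [hz'] at hw
  have hw' : w = 1 + x := by
    calc w = w * (z * (1 + x)) := by rw [hz, mul_one]
      _ = 1 + x := by rw [← mul_assoc, hw, one_mul]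
  exact ⟨⟨1 + x, z, hw' ▸ hw, hz⟩, rfl⟩

theorem Subring.mem_jacobson_bot_centralizer {s : Set R} {x : Subring.centralizer s}
    (hx : (x : R) ∈ Ideal.jacobson (⊥ : Ideal R)) :
    x ∈ Ideal.jacobson (⊥ : Ideal (Subring.centralizer s)) := by
  refine Ideal.mem_jacobson_iff.mpr fun y ↦ ?_
  obtain ⟨u, hu⟩ := Ideal.isUnit_one_add_of_mem_jacobson_bot (Ideal.mul_mem_left _ (y : R) hx)
  have hinv : (↑u⁻¹ : R) ∈ Subring.centralizer s := fun g hg ↦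
    (Commute.units_inv_right (hu ▸ (1 + y * x).prop g hg : Commute g u)).eq
  refine ⟨⟨_, hinv⟩, Ideal.mem_bot.mpr (Subtype.ext ?_)⟩
  have : (↑u⁻¹ : R) * (1 + y * x) = 1 := by simp [← hu]
  push_cast
  rw [← this]
  noncomm_ring

theorem Subring.isMulCommutative_centralizer_centralizer {s : Set R}
    (hs : s.Pairwise Commute) : IsMulCommutative (Subring.centralizer (Set.centralizer s)) :=
  .of_setLike_mul_comm fun _ h₁ _ h₂ ↦ Set.centralizer_centralizer_comm_of_comm
    (fun a ha b hb ↦ (eq_or_ne a b).elim (fun hab ↦ hab ▸ rfl) (hs ha hb)) _ h₁ _ h₂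

end Jacobson

def IsSignedSum {R : Type*} [Ring R] (a e f n : R) : Prop :=
  a = e + f + n ∨ a = e - f + n ∨ a = -e + f + n ∨ a = -e - f + n

section CommRing

variable {S : Type*} [CommRing S] {a e f n x y : S}

theorem IsSignedSum.cubic_cases (he : IsIdempotentElem e) (hf : IsIdempotentElem f)
    (h : IsSignedSum a e f n) :
    (a - n) ^ 3 = a - n ∨ (a - n) * (a - n - 1) * (a - n - 2) = 0 ∨
      (a - n) * (a - n + 1) * (a - n + 2) = 0 := by
  rcases h with rfl | rfl | rfl | rfl
  · right; left
    linear_combination (e + 3 * f - 2) * he.eq + (f + 3 * e - 2) * hf.eq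
  · left
    linear_combination (e + 1 - 3 * f) * he.eq + (3 * e - f - 1) * hf.eq
  · left
    linear_combination (3 * f - e - 1) * he.eq + (f + 1 - 3 * e) * hf.eq
  · right; right
    linear_combination (2 - e - 3 * f) * he.eq + (2 - f - 3 * e) * hf.eq

theorem IsSignedSum.isNilpotent_120 (he : IsIdempotentElem e) (hf : IsIdempotentElem f)
    (hn : IsNilpotent n) (h : IsSignedSum 3 e f n) : IsNilpotent (120 : S) := by
  rcases h.cubic_cases he hf with h | h | h
  · convert (Commute.all n (5 * (n ^ 2 - 9 * n + 26))).isNilpotent_mul_right hn using 1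
    linear_combination 5 * h
  · convert (Commute.all n (20 * (n ^ 2 - 6 * n + 11))).isNilpotent_mul_right hn using 1
    linear_combination 20 * h
  · convert (Commute.all n (2 * (n ^ 2 - 12 * n + 47))).isNilpotent_mul_right hn using 1
    linear_combination 2 * h

theorem eq_zero_of_pow_three_eq_self_of_mem_jacobson (h : y ^ 3 = y)
    (hy : y ∈ Ideal.jacobson (⊥ : Ideal S)) : y = 0 := by
  have hu := Ideal.mem_jacobson_bot.mp hy
  exact (hu (-1)).mul_left_eq_zero.mp ((hu 1).mul_left_eq_zero.mp (by linear_combination -h))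

theorem isNilpotent_of_mul_sub_one_mul_sub_two_eq_zero_of_mem_jacobson
    (h : y * (y - 1) * (y - 2) = 0) (h120 : IsNilpotent (120 : S))
    (hy : y ∈ Ideal.jacobson (⊥ : Ideal S)) : IsNilpotent y := by
  have hu := Ideal.mem_jacobson_bot.mp hy
  have hy2 : y * (y - 2) = 0 := (hu (-1)).mul_left_eq_zero.mp (by linear_combination -h)
  -- `y² = 2y` gives `y⁴ = 8y` and `y (1 + y) (1 + 2y) = 15y`
  have key : y ^ 4 * ((y * 1 + 1) * (y * 2 + 1)) = 120 * y := by
    linear_combination (2 * y ^ 4 + 7 * y ^ 3 + 15 * y ^ 2 + 30 * y + 60) * hy2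
  have : IsNilpotent (y ^ 4 * ((y * 1 + 1) * (y * 2 + 1))) :=
    key ▸ (Commute.all _ y).isNilpotent_mul_right h120
  exact (((hu 1).mul (hu 2)).isNilpotent_mul_unit_of_commute_iff (.all _ _)).mp this |>.of_pow

theorem IsSignedSum.isNilpotent_of_mem_jacobson (he : IsIdempotentElem e)
    (hf : IsIdempotentElem f) (hn : IsNilpotent n) (h120 : IsNilpotent (120 : S))
    (hx : x ∈ Ideal.jacobson (⊥ : Ideal S)) (h : IsSignedSum x e f n) : IsNilpotent x := by
  have hy : x - n ∈ Ideal.jacobson (⊥ : Ideal S) :=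
    sub_mem hx (Ideal.radical_le_jacobson (mem_nilradical.mpr hn))
  suffices IsNilpotent (x - n) by simpa using (Commute.all _ _).isNilpotent_add this hn
  rcases h.cubic_cases he hf with h | h | h
  · rw [eq_zero_of_pow_three_eq_self_of_mem_jacobson h hy]
    exact .zero
  · exact isNilpotent_of_mul_sub_one_mul_sub_two_eq_zero_of_mem_jacobson h h120 hy
  · rw [← isNilpotent_neg_iff]
    exact isNilpotent_of_mul_sub_one_mul_sub_two_eq_zero_of_mem_jacobson
      (by linear_combination -h) h120 (neg_mem hy)

end CommRing

section Ring

variable {R : Type*} [Ring R]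

theorem IsSignedSum.exists_centralizer_centralizer {a e f n : R} (he : IsIdempotentElem e)
    (hf : IsIdempotentElem f) (hn : IsNilpotent n) (hef : Commute e f) (hen : Commute e n)
    (hfn : Commute f n) (h : IsSignedSum a e f n) :
    IsMulCommutative (Subring.centralizer (Set.centralizer ({e, f, n} : Set R))) ∧
    ∃ a' e' f' n' : Subring.centralizer (Set.centralizer ({e, f, n} : Set R)), (a' : R) = a ∧
      IsIdempotentElem e' ∧ IsIdempotentElem f' ∧ IsNilpotent n' ∧ IsSignedSum a' e' f' n' := by
  set C := Subring.centralizer (Set.centralizer ({e, f, n} : Set R))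
  have hcomm : ({e, f, n} : Set R).Pairwise Commute := by
    simp [Set.pairwise_insert, hef, hen, hfn, hef.symm, hen.symm, hfn.symm]
  have he' : e ∈ C := Set.subset_centralizer_centralizer (by simp)
  have hf' : f ∈ C := Set.subset_centralizer_centralizer (by simp)
  have hn' : n ∈ C := Set.subset_centralizer_centralizer (by simp)
  have ha : a ∈ C := by
    rcases h with rfl | rfl | rfl | rfl <;> apply_rules [add_mem, sub_mem, neg_mem]
  refine ⟨Subring.isMulCommutative_centralizer_centralizer hcomm, ⟨a, ha⟩, ⟨e, he'⟩, ⟨f, hf'⟩,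
    ⟨n, hn'⟩, rfl, Subtype.ext he, Subtype.ext hf,
    (IsNilpotent.map_iff (f := C.subtype) Subtype.val_injective).mp hn, ?_⟩
  simpa [IsSignedSum, Subtype.ext_iff] using h

open scoped IsMulCommutative in
theorem IsSignedSum.isNilpotent_120_of_commute {e f n : R} (he : IsIdempotentElem e)
    (hf : IsIdempotentElem f) (hn : IsNilpotent n) (hef : Commute e f) (hen : Commute e n)
    (hfn : Commute f n) (h : IsSignedSum 3 e f n) : IsNilpotent (120 : R) := by
  obtain ⟨_, a, e', f', n', ha, he', hf', hn', h'⟩ :=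
    h.exists_centralizer_centralizer he hf hn hef hen hfn
  obtain rfl : a = 3 := Subtype.ext (by rw [ha]; norm_cast)
  simpa only [map_ofNat] using (h'.isNilpotent_120 he' hf' hn').map (Subring.subtype _)

open scoped IsMulCommutative in
theorem IsSignedSum.isNilpotent_of_mem_jacobson_of_commute {x e f n : R}
    (he : IsIdempotentElem e) (hf : IsIdempotentElem f) (hn : IsNilpotent n) (hef : Commute e f)
    (hen : Commute e n) (hfn : Commute f n) (h120 : IsNilpotent (120 : R))
    (hx : x ∈ Ideal.jacobson (⊥ : Ideal R)) (h : IsSignedSum x e f n) : IsNilpotent x := by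
  obtain ⟨_, x', e', f', n', rfl, he', hf', hn', h'⟩ :=
    h.exists_centralizer_centralizer he hf hn hef hen hfn
  have h120' : IsNilpotent (120 : Subring.centralizer (Set.centralizer ({e, f, n} : Set R))) :=
    (IsNilpotent.map_iff (f := Subring.subtype _) Subtype.val_injective).mp
      (by simpa only [map_ofNat] using h120)
  exact (h'.isNilpotent_of_mem_jacobson he' hf' hn' h120'
    (Subring.mem_jacobson_bot_centralizer hx)).map (Subring.subtype _)

end Ring

theorem jacobson_nil_of_wsnc {R : Type*} [Ring R]
    (hR : IsWeaklyStrongly2NilClean R) :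
    ∀ x ∈ Ideal.jacobson (⊥ : Ideal R), IsNilpotent x := by
  have h120 : IsNilpotent (120 : R) := by
    obtain ⟨e, f, n, he, hf, hn, hef, hen, hfn, h⟩ := hR 3
    exact IsSignedSum.isNilpotent_120_of_commute he hf hn hef hen hfn h
  intro x hx
  obtain ⟨e, f, n, he, hf, hn, hef, hen, hfn, h⟩ := hR x
  exact IsSignedSum.isNilpotent_of_mem_jacobson_of_commute he hf hn hef hen hfn h120 hx h
end

section
/- In a weakly strongly 2-nil-clean ring R, the element a^5 - a is nilpotent for every a ∈ R. -/
/-!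
Let `q(x) = x⁵ - 5x³ + 4x = (x - 2)(x - 1)x(x + 1)(x + 2)`. For commuting idempotents `e, f`
the element `±e ± f` is annihilated by `q`, since it only takes the values `-2, …, 2`; adding a
commuting nilpotent therefore makes `q(a)` nilpotent for every `a`, and `a = 3` shows that
`q(3) = 120` is nilpotent. Modulo nilpotents, `a⁵ - a = 5(a³ - a)` and `(a³ - a)³ = 36(a³ - a)`,
so a power of `5(a³ - a)` is a multiple of `120`. Each computation takes place in a commutative
subalgebra generated by the elements involved.
-/

open Polynomial
open scoped IsMulCommutative

section CommRing

variable {S : Type*} [CommRing S]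

theorem IsIdempotentElem.quintic_add_eq_zero {e f : S} (he : IsIdempotentElem e)
    (hf : IsIdempotentElem f) : (e + f) ^ 5 - 5 * (e + f) ^ 3 + 4 * (e + f) = 0 := by
  have h : (e + f) * (e + f - 1) * (e + f - 2) = 0 := by
    linear_combination (e - 2 + 3 * f) * he.eq + (f - 2 + 3 * e) * hf.eq
  linear_combination (e + f + 1) * (e + f + 2) * h

theorem IsIdempotentElem.quintic_sub_eq_zero {e f : S} (he : IsIdempotentElem e)
    (hf : IsIdempotentElem f) : (e - f) ^ 5 - 5 * (e - f) ^ 3 + 4 * (e - f) = 0 := by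
  have h : (e - f) ^ 3 = e - f := by
    linear_combination (e + 1 - 3 * f) * he.eq + (3 * e - f - 1) * hf.eq
  linear_combination ((e - f) ^ 2 - 4) * h

theorem isNilpotent_quintic_add {b n : S} (hb : b ^ 5 - 5 * b ^ 3 + 4 * b = 0)
    (hn : IsNilpotent n) : IsNilpotent ((b + n) ^ 5 - 5 * (b + n) ^ 3 + 4 * (b + n)) := by
  have := isNilpotent_aeval_sub_of_isNilpotent_sub (X ^ 5 - 5 * X ^ 3 + 4 * X : ℤ[X])
    (a := b + n) (b := b) (by rwa [add_sub_cancel_left])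
  simpa only [map_sub, map_add, map_mul, map_pow, aeval_X, map_ofNat, hb, sub_zero] using this

theorem isNilpotent_quintic_of_eq_signed_sum {e f n x : S} (he : IsIdempotentElem e)
    (hf : IsIdempotentElem f) (hn : IsNilpotent n)
    (hx : x = e + f + n ∨ x = e - f + n ∨ x = -e + f + n ∨ x = -e - f + n) :
    IsNilpotent (x ^ 5 - 5 * x ^ 3 + 4 * x) := by
  rcases hx with rfl | rfl | rfl | rfl
  · exact isNilpotent_quintic_add (he.quintic_add_eq_zero hf) hn
  · exact isNilpotent_quintic_add (he.quintic_sub_eq_zero hf) hn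
  · rw [neg_add_eq_sub]
    exact isNilpotent_quintic_add (hf.quintic_sub_eq_zero he) hn
  · refine isNilpotent_quintic_add ?_ hn
    linear_combination -(he.quintic_add_eq_zero hf)

theorem isNilpotent_pow_five_sub_self_of_isNilpotent_quintic {x : S}
    (hq : IsNilpotent (x ^ 5 - 5 * x ^ 3 + 4 * x)) (h120 : IsNilpotent (120 : S)) :
    IsNilpotent (x ^ 5 - x) := by
  have h5t : IsNilpotent (5 * (x ^ 3 - x)) := by
    refine IsNilpotent.of_pow (m := 6) ?_
    -- `(x³ - x)³ - 36 (x³ - x) = (x⁴ + 2x² + 9) q(x)` and `5⁶ · 36² = 120 · 168750`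
    have : (5 * (x ^ 3 - x)) ^ 6 = 120 * (168750 * (x ^ 3 - x) ^ 2) +
        5 ^ 6 * (x ^ 4 + 2 * x ^ 2 + 9) * ((x ^ 3 - x) ^ 3 + 36 * (x ^ 3 - x)) *
          (x ^ 5 - 5 * x ^ 3 + 4 * x) := by ring
    rw [this]
    exact (Commute.all _ _).isNilpotent_add ((Commute.all _ _).isNilpotent_mul_right h120)
      ((Commute.all _ _).isNilpotent_mul_left hq)
  rw [show x ^ 5 - x = (x ^ 5 - 5 * x ^ 3 + 4 * x) + 5 * (x ^ 3 - x) by ring]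
  exact (Commute.all _ _).isNilpotent_add hq h5t

end CommRing

theorem isNilpotent_coe_iff {R T : Type*} [Semiring R] [SetLike T R] [SubsemiringClass T R]
    {s : T} {x : s} : IsNilpotent (x : R) ↔ IsNilpotent x :=
  IsNilpotent.map_iff (f := SubsemiringClass.subtype s) Subtype.val_injective

theorem IsWeaklyStrongly2NilClean.isNilpotent_quintic {R : Type*} [Ring R]
    (hR : IsWeaklyStrongly2NilClean R) (x : R) : IsNilpotent (x ^ 5 - 5 * x ^ 3 + 4 * x) := by
  obtain ⟨e, f, n, he, hf, hn, hef, hen, hfn, hx⟩ := hR x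
  obtain ⟨T, _, heT, hfT, hnT⟩ :
      ∃ T : Subalgebra ℤ R, IsMulCommutative T ∧ e ∈ T ∧ f ∈ T ∧ n ∈ T := by
    refine ⟨Algebra.adjoin ℤ {e, f, n}, Algebra.isMulCommutative_adjoin ℤ ?_,
      Algebra.subset_adjoin (by simp), Algebra.subset_adjoin (by simp),
      Algebra.subset_adjoin (by simp)⟩
    simp only [Set.mem_insert_iff, Set.mem_singleton_iff]
    rintro _ (rfl | rfl | rfl) _ (rfl | rfl | rfl) <;> simp only [hef.eq, hen.eq, hfn.eq]
  lift e to T using heT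
  lift f to T using hfT
  lift n to T using hnT
  have hxT : x ∈ T := by
    rcases hx with rfl | rfl | rfl | rfl <;> simp [add_mem, sub_mem]
  lift x to T using hxT
  norm_cast at hx
  have he' : IsIdempotentElem e := Subtype.ext he
  have hf' : IsIdempotentElem f := Subtype.ext hf
  exact_mod_cast isNilpotent_coe_iff.2 <|
    isNilpotent_quintic_of_eq_signed_sum he' hf' (isNilpotent_coe_iff.1 hn) hx

theorem pow_five_sub_self_nilpotent_of_wsnc {R : Type*} [Ring R]
    (hR : IsWeaklyStrongly2NilClean R) (a : R) : IsNilpotent (a ^ 5 - a) := by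
  have h120 : IsNilpotent (120 : R) := by
    convert hR.isNilpotent_quintic 3 using 1
    norm_num
  obtain ⟨T, _, haT⟩ : ∃ T : Subalgebra ℤ R, IsMulCommutative T ∧ a ∈ T :=
    ⟨Algebra.adjoin ℤ {a}, inferInstance, Algebra.self_mem_adjoin_singleton ℤ a⟩
  lift a to T using haT
  have hq : IsNilpotent (a ^ 5 - 5 * a ^ 3 + 4 * a) :=
    isNilpotent_coe_iff.1 (by exact_mod_cast hR.isNilpotent_quintic a)
  exact_mod_cast isNilpotent_coe_iff.2 <|
    isNilpotent_pow_five_sub_self_of_isNilpotent_quintic hq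
      (isNilpotent_coe_iff.1 (by exact_mod_cast h120))
end

section
/- Let I be a nil ideal of a ring R (every element of I is nilpotent). Then R is weakly strongly 2-nil-clean if and only if the quotient ring R/I is weakly strongly 2-nil-clean. -/
def IsStronglyNilCleanDiff {R : Type*} [Ring R] (a : R) : Prop :=
  ∃ e f n : R, IsIdempotentElem e ∧ IsIdempotentElem f ∧ IsNilpotent n ∧
    Commute e f ∧ Commute e n ∧ Commute f n ∧ a = e - f + n

section CommRing

variable {A : Type*} [CommRing A]

lemma isNilpotent_pow_three_sub_of_isIdempotentElem {e f n : A} (he : IsIdempotentElem e)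
    (hf : IsIdempotentElem f) (hn : IsNilpotent n) :
    IsNilpotent ((e - f + n) ^ 3 - (e - f + n)) := by
  have key : (e - f + n) ^ 3 - (e - f + n) =
      n * (3 * (e - f) ^ 2 + 3 * (e - f) * n + n ^ 2 - 1) := by
    linear_combination (e + 1 - 3 * f) * he.eq + (3 * e - f - 1) * hf.eq
  rw [key]
  exact (Commute.all _ _).isNilpotent_mul_right hn

/-- The coefficients come from the Chinese remainder theorem: `8 ≡ 1/2` modulo `3` and `5` while
`8 ≡ 0` modulo `2`, and `23 - 8` is `1` modulo `2` and `0` modulo `15`. -/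
lemma exists_isIdempotentElem_eq_sub_of_pow_three_eq [IsReduced A] {b : A} (h30 : (30 : A) = 0)
    (hb : b ^ 3 = b) : ∃ e f : A, IsIdempotentElem e ∧ IsIdempotentElem f ∧ b = e - f := by
  have h15 : 15 * (b ^ 2 - b) = 0 :=
    IsReduced.eq_zero _ ⟨2, by linear_combination (225 * b - 450) * hb + 15 * (b ^ 2 - b) * h30⟩
  refine ⟨8 * b ^ 2 + 23 * b, 8 * b ^ 2 - 8 * b, ?_, ?_, ?_⟩
  · unfold IsIdempotentElem
    linear_combination (64 * b + 368) * hb + h15 + (19 * b ^ 2 + 12 * b) * h30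
  · unfold IsIdempotentElem
    linear_combination (64 * b - 128) * hb + 4 * (b ^ 2 - b) * h30
  · linear_combination -b * h30

lemma exists_isIdempotentElem_isNilpotent_sub_sub {b : A} (h30 : IsNilpotent (30 : A))
    (hb : IsNilpotent (b ^ 3 - b)) :
    ∃ e f : A, IsIdempotentElem e ∧ IsIdempotentElem f ∧ IsNilpotent (b - (e - f)) := by
  set π := Ideal.Quotient.mk (nilradical A)
  have : IsReduced (A ⧸ nilradical A) :=
    (Ideal.isRadical_iff_quotient_reduced _).mp (Ideal.radical_isRadical _)
  have hker : ∀ x ∈ RingHom.ker π, IsNilpotent x := fun x hx => by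
    rwa [Ideal.mk_ker, mem_nilradical] at hx
  obtain ⟨e, f, he, hf, hef⟩ := exists_isIdempotentElem_eq_sub_of_pow_three_eq (b := π b)
    (by simpa [map_ofNat] using (h30.map π).eq_zero)
    (by simpa [sub_eq_zero] using (hb.map π).eq_zero)
  obtain ⟨e', he', rfl⟩ := exists_isIdempotentElem_eq_of_ker_isNilpotent π hker e
    (Ideal.Quotient.mk_surjective e) he
  obtain ⟨f', hf', rfl⟩ := exists_isIdempotentElem_eq_of_ker_isNilpotent π hker f
    (Ideal.Quotient.mk_surjective f) hf
  refine ⟨e', f', he', hf', hker _ ?_⟩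
  simp [RingHom.mem_ker, hef]

end CommRing

section Ring

open scoped IsMulCommutative

variable {R S : Type*} [Ring R] [Ring S]

lemma IsStronglyNilCleanDiff.map {a : R} (g : R →+* S) (h : IsStronglyNilCleanDiff a) :
    IsStronglyNilCleanDiff (g a) := by
  obtain ⟨e, f, n, he, hf, hn, hef, hen, hfn, rfl⟩ := h
  exact ⟨g e, g f, g n, he.map g, hf.map g, hn.map g, hef.map g, hen.map g, hfn.map g,
    by simp⟩

lemma IsStronglyNilCleanDiff.isNilpotent_pow_three_sub {a : R} (h : IsStronglyNilCleanDiff a) :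
    IsNilpotent (a ^ 3 - a) := by
  obtain ⟨e, f, n, he, hf, hn, hef, hen, hfn, rfl⟩ := h
  let C := Subring.closure {e, f, n}
  have : IsMulCommutative C := Subring.isMulCommutative_closure <| by
    simp only [Set.mem_insert_iff, Set.mem_singleton_iff]
    rintro x (rfl | rfl | rfl) y (rfl | rfl | rfl) <;> first | rfl | assumption | symm; assumption
  have mem {x : R} (hx : x ∈ ({e, f, n} : Set R)) : x ∈ C := Subring.subset_closure hx
  have key := isNilpotent_pow_three_sub_of_isIdempotentElem (A := C)
    (e := ⟨e, mem (by simp)⟩) (f := ⟨f, mem (by simp)⟩) (n := ⟨n, mem (by simp)⟩)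
    (Subtype.ext he) (Subtype.ext hf) ((IsNilpotent.map_iff C.subtype_injective).mp hn)
  simpa using key.map C.subtype

lemma isStronglyNilCleanDiff_of_isNilpotent_pow_three_sub {a : R} (h30 : IsNilpotent (30 : R))
    (ha : IsNilpotent (a ^ 3 - a)) : IsStronglyNilCleanDiff a := by
  let C := Subring.closure {a}
  have : IsMulCommutative C := Subring.isMulCommutative_closure <| by
    rintro x rfl y rfl
    rfl
  have hnil {x : C} : IsNilpotent (x : R) → IsNilpotent x :=
    (IsNilpotent.map_iff C.subtype_injective).mp
  let a' : C := ⟨a, Subring.subset_closure rfl⟩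
  obtain ⟨e, f, he, hf, hn⟩ := exists_isIdempotentElem_isNilpotent_sub_sub (b := a')
    (hnil (by rwa [← map_ofNat C.subtype 30] at h30)) (hnil (by simpa using ha))
  simpa using IsStronglyNilCleanDiff.map C.subtype
    ⟨e, f, _, he, hf, hn, .all _ _, .all _ _, .all _ _, (add_sub_cancel _ _).symm⟩

theorem isWeaklyStrongly2NilClean_iff_forall_isStronglyNilCleanDiff :
    IsWeaklyStrongly2NilClean R ↔ ∀ a : R, IsStronglyNilCleanDiff (a - 1) ∨
      IsStronglyNilCleanDiff a ∨ IsStronglyNilCleanDiff (a + 1) := by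
  refine forall_congr' fun a => ⟨?_, ?_⟩
  · rintro ⟨e, f, n, he, hf, hn, hef, hen, hfn, h | h | h | h⟩
    · exact .inl ⟨e, 1 - f, n, he, hf.one_sub, hn, (Commute.one_right e).sub_right hef, hen,
        (Commute.one_left n).sub_left hfn, by rw [h]; abel⟩
    · exact .inr (.inl ⟨e, f, n, he, hf, hn, hef, hen, hfn, h⟩)
    · exact .inr (.inl ⟨f, e, n, hf, he, hn, hef.symm, hfn, hen, by rw [h]; abel⟩)
    · exact .inr (.inr ⟨1 - e, f, n, he.one_sub, hf, hn, (Commute.one_left f).sub_left hef,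
        (Commute.one_left n).sub_left hen, hfn, by rw [h]; abel⟩)
  · rintro (⟨e, f, n, he, hf, hn, hef, hen, hfn, h⟩ | ⟨e, f, n, he, hf, hn, hef, hen, hfn, h⟩ |
      ⟨e, f, n, he, hf, hn, hef, hen, hfn, h⟩)
    · refine ⟨e, 1 - f, n, he, hf.one_sub, hn, (Commute.one_right e).sub_right hef, hen,
        (Commute.one_left n).sub_left hfn, .inl ?_⟩
      rw [sub_eq_iff_eq_add.mp h]; abel
    · exact ⟨e, f, n, he, hf, hn, hef, hen, hfn, .inr (.inl h)⟩
    · refine ⟨1 - e, f, n, he.one_sub, hf, hn, (Commute.one_left f).sub_left hef,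
        (Commute.one_left n).sub_left hen, hfn, .inr (.inr (.inr ?_))⟩
      rw [eq_sub_of_add_eq h]; abel

lemma isNilpotent_natCast_of_dvd_pow {m n k : ℕ} (hmn : m ∣ n ^ k) (hm : IsNilpotent (m : R)) :
    IsNilpotent (n : R) := by
  obtain ⟨c, hc⟩ := hmn
  refine IsNilpotent.of_pow (m := k) ?_
  rw [← Nat.cast_pow, hc, Nat.cast_mul]
  exact (Nat.cast_commute _ _).isNilpotent_mul_right hm

lemma IsWeaklyStrongly2NilClean.isNilpotent_thirty (h : IsWeaklyStrongly2NilClean R) :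
    IsNilpotent (30 : R) := by
  have h30 {m k : ℕ} (hm : m ∣ 30 ^ k) (hm' : IsNilpotent (m : R)) : IsNilpotent (30 : R) :=
    mod_cast isNilpotent_natCast_of_dvd_pow hm hm'
  rcases isWeaklyStrongly2NilClean_iff_forall_isStronglyNilCleanDiff.mp h 3 with h | h | h <;>
    have h3 := h.isNilpotent_pow_three_sub <;> norm_num at h3
  · exact h30 (m := 6) (k := 1) (by norm_num) (by exact_mod_cast h3)
  · exact h30 (m := 24) (k := 3) (by norm_num) (by exact_mod_cast h3)
  · exact h30 (m := 60) (k := 2) (by norm_num) (by exact_mod_cast h3)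

theorem isWeaklyStrongly2NilClean_iff_isNilpotent_thirty :
    IsWeaklyStrongly2NilClean R ↔ IsNilpotent (30 : R) ∧ ∀ a : R,
      IsNilpotent ((a - 1) ^ 3 - (a - 1)) ∨ IsNilpotent (a ^ 3 - a) ∨
        IsNilpotent ((a + 1) ^ 3 - (a + 1)) := by
  refine ⟨fun h => ⟨h.isNilpotent_thirty, fun a => ?_⟩, fun ⟨h30, h⟩ => ?_⟩
  · exact (isWeaklyStrongly2NilClean_iff_forall_isStronglyNilCleanDiff.mp h a).imp
      (·.isNilpotent_pow_three_sub) (.imp (·.isNilpotent_pow_three_sub)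
        (·.isNilpotent_pow_three_sub))
  · have hD (b : R) := isStronglyNilCleanDiff_of_isNilpotent_pow_three_sub (a := b) h30
    exact isWeaklyStrongly2NilClean_iff_forall_isStronglyNilCleanDiff.mpr fun a =>
      (h a).imp (hD _) (.imp (hD _) (hD _))

theorem isWeaklyStrongly2NilClean_iff_of_surjective (g : R →+* S) (hg : Function.Surjective g)
    (hker : ∀ x, g x = 0 → IsNilpotent x) :
    IsWeaklyStrongly2NilClean R ↔ IsWeaklyStrongly2NilClean S := by
  have hnil (x : R) : IsNilpotent (g x) ↔ IsNilpotent x :=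
    ⟨fun ⟨k, hk⟩ => (hker _ (by rw [map_pow, hk])).of_pow, (·.map g)⟩
  rw [isWeaklyStrongly2NilClean_iff_isNilpotent_thirty,
    isWeaklyStrongly2NilClean_iff_isNilpotent_thirty, hg.forall]
  refine and_congr ?_ (forall_congr' fun a => ?_)
  · rw [← hnil, map_ofNat]
  · rw [← hnil, ← hnil, ← hnil]
    simp only [map_sub, map_add, map_pow, map_one]

end Ring

theorem wsnc_iff_quotient_nil_ideal {R : Type*} [Ring R] (I : TwoSidedIdeal R)
    (hI : ∀ x ∈ I, IsNilpotent x) :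
    IsWeaklyStrongly2NilClean R ↔ IsWeaklyStrongly2NilClean I.ringCon.Quotient :=
  isWeaklyStrongly2NilClean_iff_of_surjective I.ringCon.mk' I.ringCon.mk'_surjective
    fun x hx => hI x ((RingCon.eq _).mp hx)
end

section
/- For a ring R and n ≥ 2, the upper triangular matrix ring T_n(R) is weakly strongly 2-nil-clean if and only if R is strongly 2-nil-clean; moreover, in this case T_n(R) is strongly 2-nil-clean. -/
/-- The subring of upper triangular `n × n` matrices over `R`. -/
def upperTriangularRing (R : Type*) [Ring R] (n : ℕ) :
    Subring (Matrix (Fin n) (Fin n) R) where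
  carrier := {M | ∀ i j : Fin n, j < i → M i j = 0}
  mul_mem' := by
    intro M N hM hN i j hij
    simp only [Matrix.mul_apply]
    refine Finset.sum_eq_zero fun k _ => ?_
    rcases lt_or_ge k i with h | h
    · rw [hM i k h, zero_mul]
    · rw [hN k j (lt_of_lt_of_le hij h), mul_zero]
  one_mem' := fun i j hij => Matrix.one_apply_ne (ne_of_gt hij)
  add_mem' := by
    intro M N hM hN i j hij
    simp [Matrix.add_apply, hM i j hij, hN i j hij]
  zero_mem' := fun i j _ => rfl
  neg_mem' := by
    intro M hM i j hij
    simp [Matrix.neg_apply, hM i j hij]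

/-!
A ring is strongly 2-nil-clean exactly when `a - a ^ 3` is nilpotent for every `a`. Everything
happens in a commutative subring, where for idempotents `e, f` one has `(e - f) ^ 3 = e - f` and
`(e + f) ^ 3 = e + f + 6 e f`; and `6` is nilpotent since `3 = e + f + n` is a root of
`X (X - 1) (X - 2)` up to `n`. Conversely, modulo the nilradical of the subring generated by `a`
the elements `a ^ 2` and `a - a ^ 2` are idempotents with sum `a`, and idempotents lift.

The diagonal entries of `T_n(R)` are ring homomorphisms to `R`, and a triangular matrix with
nilpotent diagonal is nilpotent, so the criterion passes from `R` to `T_n(R)`. Conversely, for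
`n ≥ 2` the first two diagonal entries map `T_n(R)` onto `R × R`. A weak decomposition of
`(3, -3)` there uses the same signs in both coordinates, so one coordinate decomposes `3` either
as `e + f + n` or as `±(e - f) + n`; both force `6` to be nilpotent, and then every weak
decomposition in `R` already makes `a - a ^ 3` nilpotent.
-/

universe u

theorem isIdempotentElem_map_iff {M N F : Type*} [Mul M] [Mul N] [FunLike F M N]
    [MulHomClass F M N] {f : F} (hf : Function.Injective f) {e : M} :
    IsIdempotentElem (f e) ↔ IsIdempotentElem e :=
  ⟨fun h => hf (by rw [map_mul, h.eq]), fun h => h.map f⟩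

theorem isIdempotentElem_sq_of_pow_three_eq_self {M : Type*} [Monoid M] {a : M}
    (ha : a ^ 3 = a) : IsIdempotentElem (a ^ 2) := by
  rw [IsIdempotentElem, ← pow_add, show 2 + 2 = 3 + 1 by rfl, pow_succ, ha, sq]

theorem isIdempotentElem_sub_sq_of_pow_three_eq_self {Q : Type*} [CommRing Q] [IsReduced Q]
    (h6 : (6 : Q) = 0) {a : Q} (ha : a ^ 3 = a) : IsIdempotentElem (a - a ^ 2) := by
  -- `(3 (a - a ^ 2)) ^ 2 = 18 (a ^ 2 - a)`
  have h3 : 3 * (a - a ^ 2) = 0 :=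
    IsReduced.eq_zero _ ⟨2, by linear_combination (9 * a - 18) * ha + 3 * (a ^ 2 - a) * h6⟩
  rw [IsIdempotentElem]
  linear_combination (a - 2) * ha - h3

theorem exists_isIdempotentElem_isIdempotentElem_isNilpotent_eq_add_add {C : Type*}
    [CommRing C] {a : C} (h6 : IsNilpotent (6 : C)) (ha : IsNilpotent (a - a ^ 3)) :
    ∃ e f n : C, IsIdempotentElem e ∧ IsIdempotentElem f ∧ IsNilpotent n ∧
      a = e + f + n := by
  let π := Ideal.Quotient.mk (nilradical C)
  have hπ : ∀ x, π x = 0 ↔ IsNilpotent x := fun x =>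
    Ideal.Quotient.eq_zero_iff_mem.trans mem_nilradical
  have : IsReduced (C ⧸ nilradical C) :=
    (Ideal.isRadical_iff_quotient_reduced _).mp (Ideal.radical_isRadical _)
  have hker : ∀ x ∈ RingHom.ker π, IsNilpotent x := fun x hx => (hπ x).mp hx
  have hA : π a ^ 3 = π a := by
    have := (hπ _).mpr ha
    rwa [map_sub, map_pow, sub_eq_zero, eq_comm] at this
  have h6' : (6 : C ⧸ nilradical C) = 0 := by
    rw [← map_ofNat π 6]
    exact (hπ 6).mpr h6
  obtain ⟨e, he, hea⟩ := exists_isIdempotentElem_eq_of_ker_isNilpotent π hker _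
    (Ideal.Quotient.mk_surjective _) (isIdempotentElem_sq_of_pow_three_eq_self hA)
  obtain ⟨f, hf, hfa⟩ := exists_isIdempotentElem_eq_of_ker_isNilpotent π hker _
    (Ideal.Quotient.mk_surjective _) (isIdempotentElem_sub_sq_of_pow_three_eq_self h6' hA)
  refine ⟨e, f, a - e - f, he, hf, (hπ _).mp ?_, by abel⟩
  rw [map_sub, map_sub, hea, hfa]
  ring

section CommutativeSubring

variable {R : Type u} [Ring R]

open scoped IsMulCommutative in
theorem exists_injective_commRing_of_commute (s : Set R)
    (hs : ∀ x ∈ s, ∀ y ∈ s, Commute x y) :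
    ∃ (C : Type u) (_ : CommRing C) (φ : C →+* R),
      Function.Injective φ ∧ s ⊆ Set.range φ :=
  have := Subring.isMulCommutative_closure hs
  ⟨Subring.closure s, inferInstance, (Subring.closure s).subtype, Subtype.val_injective,
    fun x hx => ⟨⟨x, Subring.subset_closure hx⟩, rfl⟩⟩

theorem exists_injective_commRing_of_commute₃ {e f n : R}
    (hef : Commute e f) (hen : Commute e n) (hfn : Commute f n) :
    ∃ (C : Type u) (_ : CommRing C) (φ : C →+* R), Function.Injective φ ∧
      e ∈ Set.range φ ∧ f ∈ Set.range φ ∧ n ∈ Set.range φ := by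
  obtain ⟨C, _, φ, hφ, hs⟩ := exists_injective_commRing_of_commute {e, f, n} (by
    simp only [Set.mem_insert_iff, Set.mem_singleton_iff]
    rintro x (rfl | rfl | rfl) y (rfl | rfl | rfl) <;>
      simp only [Commute.refl, hef, hen, hfn, hef.symm, hen.symm, hfn.symm])
  exact ⟨C, _, φ, hφ, hs (by simp), hs (by simp), hs (by simp)⟩

theorem isNilpotent_six_of_three_eq_add_add {e f n : R} (he : IsIdempotentElem e)
    (hf : IsIdempotentElem f) (hn : IsNilpotent n) (hef : Commute e f) (hen : Commute e n)
    (hfn : Commute f n) (h3 : (3 : R) = e + f + n) : IsNilpotent (6 : R) := by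
  obtain ⟨C, _, φ, hφ, ⟨E, rfl⟩, ⟨F, rfl⟩, ⟨N, rfl⟩⟩ :=
    exists_injective_commRing_of_commute₃ hef hen hfn
  rw [isIdempotentElem_map_iff hφ] at he hf
  rw [IsNilpotent.map_iff hφ] at hn
  have h3 : (3 : C) = E + F + N := hφ (by rwa [map_add, map_add, map_ofNat])
  have key : (6 : C) = N * (N ^ 2 - 6 * N + 11) := by
    linear_combination
      (2 - 3 * N + N ^ 2 - F * N + F ^ 2 - E * N + 2 * E * F + E ^ 2) * h3
      + (-2 + 3 * F + E) * he.eq + (-2 + F + 3 * E) * hf.eq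
  rw [← map_ofNat φ 6, key]
  exact ((Commute.all _ _).isNilpotent_mul_right hn).map φ

theorem isNilpotent_sub_pow_three_of_eq_add_add {a e f n : R} (he : IsIdempotentElem e)
    (hf : IsIdempotentElem f) (hn : IsNilpotent n) (hef : Commute e f) (hen : Commute e n)
    (hfn : Commute f n) (h6 : IsNilpotent (6 : R)) (ha : a = e + f + n) :
    IsNilpotent (a - a ^ 3) := by
  obtain ⟨C, _, φ, hφ, ⟨E, rfl⟩, ⟨F, rfl⟩, ⟨N, rfl⟩⟩ :=
    exists_injective_commRing_of_commute₃ hef hen hfn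
  rw [isIdempotentElem_map_iff hφ] at he hf
  rw [IsNilpotent.map_iff hφ] at hn
  rw [← map_ofNat φ 6, IsNilpotent.map_iff hφ] at h6
  have key : E + F + N - (E + F + N) ^ 3
      = 6 * -(E * F) + N * (1 - 3 * (E + F) ^ 2 - 3 * (E + F) * N - N ^ 2) := by
    linear_combination (-1 - 3 * F - E) * he.eq + (-1 - F - 3 * E) * hf.eq
  have hC : IsNilpotent (E + F + N - (E + F + N) ^ 3) := by
    rw [key]
    exact (Commute.all _ _).isNilpotent_add ((Commute.all _ _).isNilpotent_mul_right h6)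
      ((Commute.all _ _).isNilpotent_mul_right hn)
  simpa [ha] using hC.map φ

theorem isNilpotent_sub_pow_three_of_eq_sub_add {a e f n : R} (he : IsIdempotentElem e)
    (hf : IsIdempotentElem f) (hn : IsNilpotent n) (hef : Commute e f) (hen : Commute e n)
    (hfn : Commute f n) (ha : a = e - f + n) : IsNilpotent (a - a ^ 3) := by
  obtain ⟨C, _, φ, hφ, ⟨E, rfl⟩, ⟨F, rfl⟩, ⟨N, rfl⟩⟩ :=
    exists_injective_commRing_of_commute₃ hef hen hfn
  rw [isIdempotentElem_map_iff hφ] at he hf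
  rw [IsNilpotent.map_iff hφ] at hn
  have key : E - F + N - (E - F + N) ^ 3
      = N * (1 - 3 * (E - F) ^ 2 - 3 * (E - F) * N - N ^ 2) := by
    linear_combination (-1 + 3 * F - E) * he.eq + (1 + F - 3 * E) * hf.eq
  have hC : IsNilpotent (E - F + N - (E - F + N) ^ 3) := by
    rw [key]
    exact (Commute.all _ _).isNilpotent_mul_right hn
  simpa [ha] using hC.map φ

theorem isNilpotent_six_of_isNilpotent_three_sub_pow_three
    (h : IsNilpotent ((3 : R) - 3 ^ 3)) : IsNilpotent (6 : R) := by
  have h24 : IsNilpotent (24 : R) := by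
    rw [← isNilpotent_neg_iff]
    convert h using 1
    norm_num
  refine IsNilpotent.of_pow (m := 3) ?_
  rw [show (6 : R) ^ 3 = 9 * 24 by norm_num]
  exact (Nat.cast_commute 9 (24 : R)).isNilpotent_mul_left h24

theorem isStrongly2NilClean_iff_forall_isNilpotent_sub_pow_three :
    IsStrongly2NilClean R ↔ ∀ a : R, IsNilpotent (a - a ^ 3) := by
  constructor
  · intro hR a
    obtain ⟨e, f, n, he, hf, hn, hef, hen, hfn, h3⟩ := hR 3
    have h6 := isNilpotent_six_of_three_eq_add_add he hf hn hef hen hfn h3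
    obtain ⟨e, f, n, he, hf, hn, hef, hen, hfn, ha⟩ := hR a
    exact isNilpotent_sub_pow_three_of_eq_add_add he hf hn hef hen hfn h6 ha
  · intro hR a
    have h6 : IsNilpotent (6 : R) := by
      rw [← isNilpotent_neg_iff]
      convert hR 2 using 1
      norm_num
    obtain ⟨C, _, φ, hφ, hs⟩ := exists_injective_commRing_of_commute {a} (by simp)
    obtain ⟨a, rfl⟩ := hs rfl
    rw [← map_ofNat φ 6, IsNilpotent.map_iff hφ] at h6
    have ha := hR (φ a)
    rw [← map_pow, ← map_sub, IsNilpotent.map_iff hφ] at ha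
    obtain ⟨e, f, n, he, hf, hn, rfl⟩ :=
      exists_isIdempotentElem_isIdempotentElem_isNilpotent_eq_add_add h6 ha
    exact ⟨φ e, φ f, φ n, he.map φ, hf.map φ, hn.map φ, (Commute.all _ _).map φ,
      (Commute.all _ _).map φ, (Commute.all _ _).map φ, by simp⟩

theorem IsStrongly2NilClean.isWeaklyStrongly2NilClean (hR : IsStrongly2NilClean R) :
    IsWeaklyStrongly2NilClean R := fun a =>
  let ⟨e, f, n, he, hf, hn, hef, hen, hfn, ha⟩ := hR a
  ⟨e, f, n, he, hf, hn, hef, hen, hfn, Or.inl ha⟩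

theorem IsWeaklyStrongly2NilClean.of_surjective {S : Type*} [Ring S]
    (hS : IsWeaklyStrongly2NilClean S) (φ : S →+* R) (hφ : Function.Surjective φ) :
    IsWeaklyStrongly2NilClean R := by
  intro a
  obtain ⟨b, rfl⟩ := hφ a
  obtain ⟨e, f, n, he, hf, hn, hef, hen, hfn, hb⟩ := hS b
  refine ⟨φ e, φ f, φ n, he.map φ, hf.map φ, hn.map φ, hef.map φ, hen.map φ, hfn.map φ,
    ?_⟩
  rcases hb with rfl | rfl | rfl | rfl <;> simp

theorem IsWeaklyStrongly2NilClean.isNilpotent_sub_pow_three (hR : IsWeaklyStrongly2NilClean R)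
    (h6 : IsNilpotent (6 : R)) (a : R) : IsNilpotent (a - a ^ 3) := by
  obtain ⟨e, f, n, he, hf, hn, hef, hen, hfn, ha | ha | ha | ha⟩ := hR a
  · exact isNilpotent_sub_pow_three_of_eq_add_add he hf hn hef hen hfn h6 ha
  · exact isNilpotent_sub_pow_three_of_eq_sub_add he hf hn hef hen hfn ha
  · exact isNilpotent_sub_pow_three_of_eq_sub_add hf he hn hef.symm hfn hen (by rw [ha]; abel)
  · have h := isNilpotent_sub_pow_three_of_eq_add_add he hf hn.neg hef hen.neg_right
      hfn.neg_right h6 (a := -a) (by rw [ha]; abel)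
    rwa [show -a - (-a) ^ 3 = -(a - a ^ 3) by noncomm_ring, isNilpotent_neg_iff] at h

theorem IsWeaklyStrongly2NilClean.isNilpotent_six_of_prod
    (h : IsWeaklyStrongly2NilClean (R × R)) : IsNilpotent (6 : R) := by
  obtain ⟨e, f, n, he, hf, hn, hef, hen, hfn, hd⟩ := h ((3 : R), (-3 : R))
  rcases hd with hd | hd | hd | hd
  · exact isNilpotent_six_of_three_eq_add_add (he.map (RingHom.fst R R)) (hf.map _) (hn.map _)
      (hef.map _) (hen.map _) (hfn.map _) (congrArg Prod.fst hd)
  · exact isNilpotent_six_of_isNilpotent_three_sub_pow_three <|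
      isNilpotent_sub_pow_three_of_eq_sub_add (he.map (RingHom.fst R R)) (hf.map _) (hn.map _)
      (hef.map _) (hen.map _) (hfn.map _) (congrArg Prod.fst hd)
  · exact isNilpotent_six_of_isNilpotent_three_sub_pow_three <|
      isNilpotent_sub_pow_three_of_eq_sub_add (hf.map (RingHom.fst R R)) (he.map _) (hn.map _)
      (hef.symm.map _) (hfn.map _) (hen.map _) (by
        change (3 : R) = f.1 - e.1 + n.1
        rw [show (3 : R) = -e.1 + f.1 + n.1 from congrArg Prod.fst hd]; abel)
  · have h₂ : (-3 : R) = -e.2 - f.2 + n.2 := congrArg Prod.snd hd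
    exact isNilpotent_six_of_three_eq_add_add (he.map (RingHom.snd R R)) (hf.map _)
      (hn.map _).neg (hef.map _) (hen.map _).neg_right (hfn.map _).neg_right
      (by change (3 : R) = e.2 + f.2 + -n.2; rw [← neg_neg (3 : R), h₂]; abel)

end CommutativeSubring

theorem Matrix.pow_apply_eq_zero_of_lt_add {R : Type*} [Semiring R] {n : ℕ}
    {N : Matrix (Fin n) (Fin n) R} (hN : ∀ i j, j ≤ i → N i j = 0) (k : ℕ) (i j : Fin n)
    (hij : (j : ℕ) < i + k) : (N ^ k) i j = 0 := by
  induction k generalizing j with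
  | zero => exact Matrix.one_apply_ne (Fin.ne_of_val_ne (by omega))
  | succ k ih =>
    rw [pow_succ, Matrix.mul_apply]
    refine Finset.sum_eq_zero fun l _ => ?_
    rcases lt_or_ge (l : ℕ) (i + k) with hl | hl
    · rw [ih l hl, zero_mul]
    · rw [hN l j (Fin.le_def.mpr (by omega)), mul_zero]

theorem Matrix.pow_eq_zero_of_forall_le_apply_eq_zero {R : Type*} [Semiring R] {n : ℕ}
    {N : Matrix (Fin n) (Fin n) R} (hN : ∀ i j, j ≤ i → N i j = 0) : N ^ n = 0 := by
  ext i j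
  exact Matrix.pow_apply_eq_zero_of_lt_add hN n i j (by omega)

namespace upperTriangularRing

variable {R : Type*} [Ring R] {n : ℕ}

def diagEntry (i : Fin n) : upperTriangularRing R n →+* R where
  toFun M := (M : Matrix (Fin n) (Fin n) R) i i
  map_one' := Matrix.one_apply_eq i
  map_zero' := rfl
  map_add' _ _ := rfl
  map_mul' M N := by
    change ((M : Matrix (Fin n) (Fin n) R) * N) i i = _
    rw [Matrix.mul_apply]
    refine Finset.sum_eq_single_of_mem i (Finset.mem_univ i) fun k _ hk => ?_
    rcases lt_or_gt_of_ne hk with h | h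
    · rw [M.2 i k h, zero_mul]
    · rw [N.2 k i h, mul_zero]

@[simp]
theorem diagEntry_apply (i : Fin n) (M : upperTriangularRing R n) :
    diagEntry i M = (M : Matrix (Fin n) (Fin n) R) i i :=
  rfl

theorem diagonal_mem (d : Fin n → R) : Matrix.diagonal d ∈ upperTriangularRing R n :=
  fun _ _ hij => Matrix.diagonal_apply_ne d (ne_of_gt hij)

theorem diagEntry_prod_surjective {i j : Fin n} (hij : i ≠ j) :
    Function.Surjective
      ((diagEntry i).prod (diagEntry j) : upperTriangularRing R n →+* R × R) := by
  rintro ⟨x, y⟩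
  refine ⟨⟨Matrix.diagonal (Pi.single i x + Pi.single j y), diagonal_mem _⟩, ?_⟩
  simp [hij, hij.symm]

theorem isNilpotent_of_forall_isNilpotent_diagEntry (M : upperTriangularRing R n)
    (hM : ∀ i, IsNilpotent (diagEntry i M)) : IsNilpotent M := by
  obtain ⟨K, hK⟩ : ∃ K, ∀ i, diagEntry i M ^ K = 0 := by
    choose k hk using hM
    exact ⟨Finset.univ.sup k, fun i =>
      pow_eq_zero_of_le (Finset.le_sup (Finset.mem_univ i)) (hk i)⟩
  have hMK : ∀ i j, j ≤ i →
      ((M ^ K : upperTriangularRing R n) : Matrix (Fin n) (Fin n) R) i j = 0 := by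
    intro i j hji
    rcases hji.lt_or_eq with hji | rfl
    · exact (M ^ K).2 i j hji
    · exact (map_pow (diagEntry j) M K).trans (hK j)
  refine ⟨K * n, Subtype.ext ?_⟩
  rw [pow_mul, SubmonoidClass.coe_pow, Matrix.pow_eq_zero_of_forall_le_apply_eq_zero hMK]
  rfl

theorem isStrongly2NilClean (hR : IsStrongly2NilClean R) :
    IsStrongly2NilClean (upperTriangularRing R n) := by
  rw [isStrongly2NilClean_iff_forall_isNilpotent_sub_pow_three] at hR ⊢
  refine fun A => isNilpotent_of_forall_isNilpotent_diagEntry _ fun i => ?_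
  rw [map_sub, map_pow]
  exact hR _

end upperTriangularRing

theorem upperTriangular_wsnc_iff {R : Type*} [Ring R] (n : ℕ) (hn : 2 ≤ n) :
    (IsWeaklyStrongly2NilClean (upperTriangularRing R n) ↔ IsStrongly2NilClean R) ∧
    (IsWeaklyStrongly2NilClean (upperTriangularRing R n) →
      IsStrongly2NilClean (upperTriangularRing R n)) := by
  have strongly_of_weak :
      IsWeaklyStrongly2NilClean (upperTriangularRing R n) → IsStrongly2NilClean R := by
    intro hT
    have hRR := hT.of_surjective _ (upperTriangularRing.diagEntry_prod_surjective
      (i := ⟨0, by omega⟩) (j := ⟨1, by omega⟩) (by simp))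
    rw [isStrongly2NilClean_iff_forall_isNilpotent_sub_pow_three]
    exact (hRR.of_surjective (RingHom.fst R R) Prod.fst_surjective).isNilpotent_sub_pow_three
      hRR.isNilpotent_six_of_prod
  exact ⟨⟨strongly_of_weak,
      fun hR => (upperTriangularRing.isStrongly2NilClean hR).isWeaklyStrongly2NilClean⟩,
    fun hT => upperTriangularRing.isStrongly2NilClean (strongly_of_weak hT)⟩
end
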